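/- arXiv:2508.12328 — 7 statements merged into one kernel-verified Lean document; each statement's English description precedes it below -/
import Mathlib

section
/- Heterogeneous-prior transformation lemma: if the receiver's updating rule has distortion function family D, with q the sender's Bayesian posterior after the first signal and r = μ_B(τ,q)(·|t) the sender's second Bayesian posterior, then the receiver's second-step posterior from prior D_p(q) satisfies μ(τ, D_p(q))(·|t) = D_{D_p(q)}( (r·(D_p(q)/q)) / Σ_{θ'} r(θ')·D_p(q)(θ')/q(θ') ). -/
open Finset

/-- heterogeneous-prior transformation lemma: if the receiver's updating
rule `μ` systematically distorts updated beliefs with distortion-function family `D`,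
`q` is the sender's Bayesian posterior after the first signal (full support), and
`r = μ_B(τ,q)(·|t)` is the sender's second Bayesian posterior, then the receiver's
second-step posterior from prior `D_p(q)` satisfies
`μ(τ, D_p(q))(·|t) = D_{D_p(q)}( (r·(D_p(q)/q)) / Σ_{θ'} r(θ')·D_p(q)(θ')/q(θ') )`. -/
theorem hetero_prior_transformation {Θ S : Type*} [Fintype Θ] [Nonempty Θ]
    (μ : (Θ → S → ℝ) → (Θ → ℝ) → S → Θ → ℝ)
    (D : (Θ → ℝ) → (Θ → ℝ) → Θ → ℝ)
    -- μ systematically distorts updated beliefs with distortion function family D: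
    (hD : ∀ (p' : Θ → ℝ) (σ : Θ → S → ℝ) (s : S),
      (∀ θ, 0 < p' θ) → (0 < ∑ θ, p' θ * σ θ s) →
      μ σ p' s = fun θ => D p' (fun θ'' => p' θ'' * σ θ'' s / ∑ θ', p' θ' * σ θ' s) θ)
    (p q : Θ → ℝ) (hp : ∀ θ, 0 < p θ) (hq : ∀ θ, 0 < q θ)
    (hDpq : ∀ θ, 0 < D p q θ)
    (τ : Θ → S → ℝ) (t : S) (hτ : ∀ θ, 0 < τ θ t) :
    let r : Θ → ℝ := fun θ => q θ * τ θ t / ∑ θ', q θ' * τ θ' t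
    μ τ (D p q) t
      = fun θ => D (D p q)
          (fun θ'' => r θ'' * (D p q θ'' / q θ'') / ∑ θ', r θ' * (D p q θ' / q θ')) θ := by
  intro r
  have hq0 : (0:ℝ) < ∑ θ', q θ' * τ θ' t :=
    Finset.sum_pos (fun θ _ => mul_pos (hq θ) (hτ θ)) Finset.univ_nonempty
  have hsum : (0:ℝ) < ∑ θ, D p q θ * τ θ t :=
    Finset.sum_pos (fun θ _ => mul_pos (hDpq θ) (hτ θ)) Finset.univ_nonempty
  have key : ∀ θ'', r θ'' * (D p q θ'' / q θ'') = D p q θ'' * τ θ'' t / ∑ θ', q θ' * τ θ' t := by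
    intro θ''
    simp only [r]
    field_simp [(hq θ'').ne', hq0.ne']
  rw [hD (D p q) τ t hDpq hsum]
  funext θ
  congr 1
  funext θ''
  rw [key θ'']
  have : (∑ θ', r θ' * (D p q θ' / q θ'))
      = (∑ θ', D p q θ' * τ θ' t) / ∑ θ', q θ' * τ θ' t := by
    simp_rw [key]
    exact Finset.sum_div .. |>.symm
  rw [this]
  field_simp [hq0.ne', hsum.ne']
end

section
/- For divisible updating with homeomorphism F, the second-step distortion equals the first-step distortion: D_q^{II}(r) = D_p(r) for all full-support q, r; equivalently, μ_F(τ, D_p(q))(θ|t) = D_p(r)(θ) where r is the Bayesian posterior of the sender from prior q under (τ,t). -/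
open Finset

private lemma aux_div (a b c d S T : ℝ) (hc : c ≠ 0) (hd : d ≠ 0) :
    (a * c / S) / d * (b * (d / c) / T) = a * b / (S * T) := by
  have h1 : a * c / S / d * (b * (d / c) / T) = a * b / (S * T) * (c / c) * (d / d) := by
    ring
  rw [h1, div_self hc, div_self hd, mul_one, mul_one]

/-- For divisible updating with homeomorphism `F` (with inverse `Finv`),
the second-step distortion equals the first-step distortion: `D_q^{II}(r) = D_p(r)`
for all full-support `q, r`, where the distortion function of divisible updating is
`D_p(x)(θ) = (F⁻¹)_θ( (F_θ(p)/p(θ))x(θ) / Σ_{θ'} (F_{θ'}(p)/p(θ'))x(θ') )` and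
`D_q^{II}(r) = D_{D_p(q)}( normalized r·(D_p(q)/q) )`. -/
theorem divisible_second_step_distortion {Θ : Type*} [Fintype Θ] [Nonempty Θ]
    (F Finv : (Θ → ℝ) → Θ → ℝ)
    (hFinv : ∀ x, F (Finv x) = x) (hinvF : ∀ x, Finv (F x) = x)
    -- F and F⁻¹ map full-support beliefs to full-support beliefs
    (hFpos : ∀ x : Θ → ℝ, (∀ θ, 0 < x θ) → ∀ θ, 0 < F x θ)
    (hFinvpos : ∀ x : Θ → ℝ, (∀ θ, 0 < x θ) → ∀ θ, 0 < Finv x θ)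
    (p q r : Θ → ℝ) (hp : ∀ θ, 0 < p θ) (hq : ∀ θ, 0 < q θ) (hr : ∀ θ, 0 < r θ) :
    let Dp : (Θ → ℝ) → (Θ → ℝ) → Θ → ℝ := fun pr x => fun θ =>
      Finv (fun θ'' => (F pr θ'' / pr θ'') * x θ'' / ∑ θ', (F pr θ' / pr θ') * x θ') θ
    let r' : Θ → ℝ := fun θ =>
      r θ * (Dp p q θ / q θ) / ∑ θ', r θ' * (Dp p q θ' / q θ')
    -- D_q^{II}(r) = D_p(r)
    Dp (Dp p q) r' = Dp p r := by

  intro Dp r'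
  have hA : ∀ θ, 0 < F p θ / p θ := fun θ => div_pos (hFpos p hp θ) (hp θ)
  have hS : 0 < ∑ θ', (F p θ' / p θ') * q θ' :=
    Finset.sum_pos (fun θ _ => mul_pos (hA θ) (hq θ)) Finset.univ_nonempty
  set G : Θ → ℝ := fun θ'' => (F p θ'' / p θ'') * q θ'' / ∑ θ', (F p θ' / p θ') * q θ'
    with hG
  have hGpos : ∀ θ, 0 < G θ := fun θ => div_pos (mul_pos (hA θ) (hq θ)) hS
  have hDpq : Dp p q = Finv G := rfl
  have hDpqpos : ∀ θ, 0 < Dp p q θ := by rw [hDpq]; exact hFinvpos G hGpos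
  have hFDpq : F (Dp p q) = G := by rw [hDpq, hFinv]
  have hT : 0 < ∑ θ', r θ' * (Dp p q θ' / q θ') :=
    Finset.sum_pos (fun θ _ => mul_pos (hr θ) (div_pos (hDpqpos θ) (hq θ)))
      Finset.univ_nonempty
  have hR : 0 < ∑ θ', (F p θ' / p θ') * r θ' :=
    Finset.sum_pos (fun θ _ => mul_pos (hA θ) (hr θ)) Finset.univ_nonempty
  have key : ∀ θ, (F (Dp p q) θ / Dp p q θ) * r' θ
      = (F p θ / p θ) * r θ / ((∑ θ', (F p θ' / p θ') * q θ')
          * ∑ θ', r θ' * (Dp p q θ' / q θ')) := by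
    intro θ
    rw [hFDpq]
    show G θ / Dp p q θ * (r θ * (Dp p q θ / q θ) / ∑ θ', r θ' * (Dp p q θ' / q θ')) = _
    rw [hG]
    exact aux_div _ _ _ _ _ _ (hq θ).ne' (hDpqpos θ).ne'
  have hsum : (∑ θ', (F (Dp p q) θ' / Dp p q θ') * r' θ')
      = (∑ θ', (F p θ' / p θ') * r θ') / ((∑ θ', (F p θ' / p θ') * q θ')
          * ∑ θ', r θ' * (Dp p q θ' / q θ')) := by
    rw [Finset.sum_div]
    exact Finset.sum_congr rfl fun θ _ => key θ
  funext θ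
  show Finv _ θ = Finv _ θ
  congr 1
  funext θ''
  rw [key θ'', hsum, div_div_div_cancel_right₀]
  positivity
end

section
/- Under divisible updating, the sender's feasible ex-ante payoff set from two-step persuasion is contained in the one-shot feasible set: any payoff achieved by choosing ρ₁ ∈ R(p) and ρ₂(q) ∈ R(q) for each q equals E_{ρ*}[v̌(r̃)] for ρ* ∈ R(p), where ρ* is the compound distribution. -/
open Finset

/-- Under divisible updating (so that `v̌^q = v̌` for all `q`), the sender's
feasible ex-ante payoff set from two-step persuasion is contained in the one-shot
feasible set: any payoff achieved by choosing a Bayes-plausible `ρ₁ ∈ R(p)` and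
`ρ₂(q) ∈ R(q)` for each `q` equals `E_{ρ*}[v̌(r̃)]` where the compound distribution
`ρ* = ∫ ρ₂(q) dρ₁(q)` is Bayes-plausible for `p` (here all distributions of posteriors
are finitely supported, represented by weight families). -/
theorem two_step_subset_one_shot {Θ I J : Type*} [Fintype Θ] [Fintype I] [Fintype J]
    (p : Θ → ℝ) (w : I → ℝ) (w2 : I → J → ℝ)
    (q : I → Θ → ℝ) (r : I → J → Θ → ℝ) (vch : (Θ → ℝ) → ℝ)
    (hw : ∀ i, 0 ≤ w i) (hw1 : ∑ i, w i = 1)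
    (hw2 : ∀ i j, 0 ≤ w2 i j) (hw21 : ∀ i, ∑ j, w2 i j = 1)
    -- ρ₁ ∈ R(p)
    (hq : ∀ θ, ∑ i, w i * q i θ = p θ)
    -- ρ₂(q) ∈ R(q) for each q in the support of ρ₁
    (hr : ∀ i θ, ∑ j, w2 i j * r i j θ = q i θ) :
    -- the compound distribution ρ* is Bayes-plausible for p ...
    (∀ θ, ∑ i, ∑ j, (w i * w2 i j) * r i j θ = p θ) ∧
    -- ... and the two-step payoff equals the one-shot payoff E_{ρ*}[v̌(r̃)]
    (∑ i, w i * ∑ j, w2 i j * vch (r i j)) = ∑ i, ∑ j, (w i * w2 i j) * vch (r i j) := by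
  constructor
  · intro θ
    rw [← hq θ]
    refine Finset.sum_congr rfl fun i _ => ?_
    rw [← hr i θ, Finset.mul_sum]
    exact Finset.sum_congr rfl fun j _ => by ring
  · refine Finset.sum_congr rfl fun i _ => ?_
    rw [Finset.mul_sum]
    exact Finset.sum_congr rfl fun j _ => by ring
end

section
/- For Grether's α–β rule on a binary state space, the transformed two-step distortion is D_q^{II}(r) = p^{α(α-β)} q^{(α-1)β} r^β / (p^{α(α-β)} q^{(α-1)β} r^β + (1-p)^{α(α-β)} (1-q)^{(α-1)β} (1-r)^β), where all beliefs denote the probability of state 1. -/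
/-- Grether distortion on a binary state space (belief = probability of state 1). -/
noncomputable def gretherD (α β p x : ℝ) : ℝ :=
  p ^ (α - β) * x ^ β / (p ^ (α - β) * x ^ β + (1 - p) ^ (α - β) * (1 - x) ^ β)

/-!
Write every belief as a normalised pair of positive weights, `x = a / (a + b)`. Then the Grether
distortion acts on weights by `(a, b) ↦ (a ^ (α - β) * c ^ β, b ^ (α - β) * d ^ β)`, and the
transformed posterior `r'` has weights `(r * A * (1 - q), (1 - r) * B * q)`, where `(A, B)` are the
weights of `D_p(q)`. Expanding `A ^ (α - β) * A ^ β = A ^ α` gives the two weights of the claimed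
formula, both multiplied by the common factor `(q * (1 - q)) ^ β`, which cancels.
-/

open Real

lemma one_sub_div_add {a b : ℝ} (h : a + b ≠ 0) : 1 - a / (a + b) = b / (a + b) := by
  rw [one_sub_div h, add_sub_cancel_left]

lemma gretherD_div_add_div (α β : ℝ) {a b c d : ℝ} (ha : 0 < a) (hb : 0 < b) (hc : 0 < c)
    (hd : 0 < d) :
    gretherD α β (a / (a + b)) (c / (c + d))
      = a ^ (α - β) * c ^ β / (a ^ (α - β) * c ^ β + b ^ (α - β) * d ^ β) := by
  have hab : 0 < a + b := by positivity
  have hcd : 0 < c + d := by positivity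
  unfold gretherD
  rw [one_sub_div_add hab.ne', one_sub_div_add hcd.ne', div_rpow ha.le hab.le,
    div_rpow hb.le hab.le, div_rpow hc.le hcd.le, div_rpow hd.le hcd.le]
  have hab_pow : 0 < (a + b) ^ (α - β) := rpow_pos_of_pos hab _
  have hcd_pow : 0 < (c + d) ^ β := rpow_pos_of_pos hcd _
  field_simp

lemma bayes_update_div_add {A B q r : ℝ} (hAB : A + B ≠ 0) (hq : q ≠ 0) (hq1 : 1 - q ≠ 0) :
    r * (A / (A + B) / q) / (r * (A / (A + B) / q) + (1 - r) * ((1 - A / (A + B)) / (1 - q)))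
      = r * A * (1 - q) / (r * A * (1 - q) + (1 - r) * B * q) := by
  rw [one_sub_div_add hAB]
  field_simp

lemma grether_weight_rpow (α β : ℝ) {p q s t : ℝ} (hp : 0 < p) (hq : 0 < q) (hs : 0 ≤ s)
    (ht : 0 ≤ t) :
    (p ^ (α - β) * q ^ β) ^ (α - β) * (s * (p ^ (α - β) * q ^ β) * t) ^ β
      = p ^ (α * (α - β)) * q ^ ((α - 1) * β) * s ^ β * (q * t) ^ β := by
  set A := p ^ (α - β) * q ^ β
  have hA : 0 < A := by positivity
  have hA_rpow_add : A ^ (α - β) * A ^ β = A ^ α := by rw [← rpow_add hA, sub_add_cancel]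
  have hA_rpow_α : A ^ α = p ^ (α * (α - β)) * q ^ ((α - 1) * β) * q ^ β := by
    rw [mul_rpow (by positivity) (by positivity), ← rpow_mul hp.le, ← rpow_mul hq.le, mul_assoc,
      ← rpow_add hq]
    ring_nf
  rw [mul_rpow (by positivity) ht, mul_rpow hs hA.le, mul_rpow hq.le ht]
  calc A ^ (α - β) * (s ^ β * A ^ β * t ^ β) = A ^ α * s ^ β * t ^ β := by
        rw [← hA_rpow_add]; ring
    _ = _ := by rw [hA_rpow_α]; ring

theorem grether_two_step_distortion_general (α β p q r : ℝ)
    (hp : 0 < p) (hp1 : p < 1) (hq : 0 < q) (hq1 : q < 1) (hr : 0 < r) (hr1 : r < 1) :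
    let d : ℝ := gretherD α β p q
    let r' : ℝ := r * (d / q) / (r * (d / q) + (1 - r) * ((1 - d) / (1 - q)))
    gretherD α β d r'
      = p ^ (α * (α - β)) * q ^ ((α - 1) * β) * r ^ β /
        (p ^ (α * (α - β)) * q ^ ((α - 1) * β) * r ^ β +
          (1 - p) ^ (α * (α - β)) * (1 - q) ^ ((α - 1) * β) * (1 - r) ^ β) := by
  intro d r'
  have hp1' : 0 < 1 - p := by linarith
  have hq1' : 0 < 1 - q := by linarith
  have hr1' : 0 < 1 - r := by linarith
  set A := p ^ (α - β) * q ^ β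
  set B := (1 - p) ^ (α - β) * (1 - q) ^ β
  have hA : 0 < A := by positivity
  have hB : 0 < B := by positivity
  have hr' : r' = r * A * (1 - q) / (r * A * (1 - q) + (1 - r) * B * q) :=
    bayes_update_div_add (by positivity) hq.ne' hq1'.ne'
  have hK : 0 < (q * (1 - q)) ^ β := by positivity
  change gretherD α β (A / (A + B)) r' = _
  rw [hr', gretherD_div_add_div α β hA hB (by positivity) (by positivity),
    grether_weight_rpow α β hp hq hr.le hq1'.le, grether_weight_rpow α β hp1' hq1' hr1'.le hq.le,
    mul_comm (1 - q) q, ← add_mul, mul_div_mul_right _ _ hK.ne']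

/-- For Grether's α–β rule on a binary state space, the transformed
two-step distortion is
`D_q^{II}(r) = p^{α(α-β)} q^{(α-1)β} r^β /
  (p^{α(α-β)} q^{(α-1)β} r^β + (1-p)^{α(α-β)} (1-q)^{(α-1)β} (1-r)^β)`. -/
theorem grether_two_step_distortion (α β p q r : ℝ) (hα : 0 < α) (hβ : 0 < β)
    (hp : 0 < p) (hp1 : p < 1) (hq : 0 < q) (hq1 : q < 1) (hr : 0 < r) (hr1 : r < 1) :
    let d : ℝ := gretherD α β p q
    let r' : ℝ := r * (d / q) / (r * (d / q) + (1 - r) * ((1 - d) / (1 - q)))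
    gretherD α β d r'
      = p ^ (α * (α - β)) * q ^ ((α - 1) * β) * r ^ β /
        (p ^ (α * (α - β)) * q ^ ((α - 1) * β) * r ^ β +
          (1 - p) ^ (α * (α - β)) * (1 - q) ^ ((α - 1) * β) * (1 - r) ^ β) :=
  grether_two_step_distortion_general α β p q r hp hp1 hq hq1 hr hr1
end

section
/- For Grether's α–β rule on a binary state space, D_q^{II}(r) ≥ 1/2 if and only if r ≥ r_{α,β}(p,q), where r_{α,β}(p,q) = (1-p)^{(α/β)(α-β)}(1-q)^{α-1} / [(1-p)^{(α/β)(α-β)}(1-q)^{α-1} + p^{(α/β)(α-β)} q^{α-1}]. -/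
/-- For Grether's α–β rule on a binary state space,
`D_q^{II}(r) ≥ 1/2` if and only if `r ≥ r_{α,β}(p,q)`, where
`r_{α,β}(p,q) = (1-p)^{(α/β)(α-β)}(1-q)^{α-1} /
  [(1-p)^{(α/β)(α-β)}(1-q)^{α-1} + p^{(α/β)(α-β)} q^{α-1}]`. -/
theorem grether_threshold (α β p q r : ℝ) (hα : 0 < α) (hβ : 0 < β)
    (hp : 0 < p) (hp1 : p < 1) (hq : 0 < q) (hq1 : q < 1) (hr : 0 < r) (hr1 : r < 1) :
    let D2 : ℝ := p ^ (α * (α - β)) * q ^ ((α - 1) * β) * r ^ β /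
        (p ^ (α * (α - β)) * q ^ ((α - 1) * β) * r ^ β +
          (1 - p) ^ (α * (α - β)) * (1 - q) ^ ((α - 1) * β) * (1 - r) ^ β)
    let rth : ℝ := (1 - p) ^ ((α / β) * (α - β)) * (1 - q) ^ (α - 1) /
        ((1 - p) ^ ((α / β) * (α - β)) * (1 - q) ^ (α - 1) +
          p ^ ((α / β) * (α - β)) * q ^ (α - 1))
    (1 / 2 ≤ D2 ↔ rth ≤ r) := by
  intro D2 rth
  have hp' : (0:ℝ) < 1 - p := by linarith
  have hq' : (0:ℝ) < 1 - q := by linarith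
  have hr' : (0:ℝ) < 1 - r := by linarith
  set a : ℝ := p ^ ((α / β) * (α - β)) * q ^ (α - 1) with ha
  set b : ℝ := (1 - p) ^ ((α / β) * (α - β)) * (1 - q) ^ (α - 1) with hb
  have hA : 0 < a := by positivity
  have hB : 0 < b := by positivity
  have hmul : (α / β) * (α - β) * β = α * (α - β) := by
    field_simp
  have key : ∀ x y : ℝ, 0 < x → 0 < y →
      x ^ (α * (α - β)) * y ^ ((α - 1) * β) =
        (x ^ ((α / β) * (α - β)) * y ^ (α - 1)) ^ β := by
    intro x y hx hy
    rw [Real.mul_rpow (by positivity) (by positivity),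
      ← Real.rpow_mul hx.le, ← Real.rpow_mul hy.le, hmul]
  have hA2 : p ^ (α * (α - β)) * q ^ ((α - 1) * β) * r ^ β = (a * r) ^ β := by
    rw [Real.mul_rpow hA.le hr.le, ha, key p q hp hq]
  have hB2 : (1 - p) ^ (α * (α - β)) * (1 - q) ^ ((α - 1) * β) * (1 - r) ^ β
      = (b * (1 - r)) ^ β := by
    rw [Real.mul_rpow hB.le hr'.le, hb, key (1 - p) (1 - q) hp' hq']
  have hiff1 : 1 / 2 ≤ D2 ↔ b * (1 - r) ≤ a * r := by
    show 1 / 2 ≤ _ / _ ↔ _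
    rw [hA2, hB2,
      le_div_iff₀ (by positivity : (0:ℝ) < (a * r) ^ β + (b * (1 - r)) ^ β)]
    constructor
    · intro h
      have h2 : (b * (1 - r)) ^ β ≤ (a * r) ^ β := by linarith
      exact (Real.rpow_le_rpow_iff (by positivity) (by positivity) hβ).mp h2
    · intro h
      have h2 : (b * (1 - r)) ^ β ≤ (a * r) ^ β :=
        Real.rpow_le_rpow (by positivity) h hβ.le
      linarith
  have hiff2 : rth ≤ r ↔ b * (1 - r) ≤ a * r := by
    show _ / _ ≤ r ↔ _
    rw [div_le_iff₀ (by positivity : (0:ℝ) < b + a)]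
    constructor <;> intro h <;> nlinarith
  rw [hiff1, hiff2]
end

section
/- For the linear distortion rule on a binary state space with parameter α > 0 and prior p ∈ (0, 1/2), with threshold q_α = 1/(2α) - ((1-α)/α)p ∈ (0,1], the one-shot non-Bayesian persuasion value is [CAV](1{·≥q_α})(p) = p/q_α = 2αp / (1 - 2(1-α)p), provided p < q_α. -/
/-- Concavification: the least concave majorant on `[0,1]`, evaluated pointwise
(the pointwise infimum over all concave functions on `[0,1]` dominating `f`). -/
noncomputable def cav (f : ℝ → ℝ) (x : ℝ) : ℝ :=
  sInf {y | ∃ g : ℝ → ℝ, ConcaveOn ℝ (Set.Icc (0 : ℝ) 1) g ∧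
    (∀ z ∈ Set.Icc (0 : ℝ) 1, f z ≤ g z) ∧ y = g x}

/-- For the linear distortion rule on a binary state space with parameter
`α > 0` and prior `p`, with threshold `q_α = 1/(2α) - ((1-α)/α)p ∈ (0,1]` and `p < q_α`,
the one-shot non-Bayesian persuasion value is
`[CAV](1{·≥q_α})(p) = p/q_α = 2αp / (1 - 2(1-α)p)`. -/
theorem linear_distortion_one_shot_value (p α : ℝ) (hα : 0 < α)
    (hp : 0 < p) (hpq : p < 1 / (2 * α) - ((1 - α) / α) * p)
    (hq1 : 1 / (2 * α) - ((1 - α) / α) * p ≤ 1) :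
    let qα : ℝ := 1 / (2 * α) - ((1 - α) / α) * p
    cav (fun q => if qα ≤ q then (1 : ℝ) else 0) p = p / qα ∧
    p / qα = 2 * α * p / (1 - 2 * (1 - α) * p) := by
  intro qα
  have hq0 : 0 < qα := lt_trans hp hpq
  set f : ℝ → ℝ := fun q => if qα ≤ q then (1 : ℝ) else 0 with hf
  set S : Set ℝ := {y | ∃ g : ℝ → ℝ, ConcaveOn ℝ (Set.Icc (0 : ℝ) 1) g ∧
    (∀ z ∈ Set.Icc (0 : ℝ) 1, f z ≤ g z) ∧ y = g p} with hS
  -- The linear majorant q ↦ q / qα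
  have hgconc : ConcaveOn ℝ (Set.Icc (0 : ℝ) 1) (fun q => q / qα) := by
    refine ⟨convex_Icc 0 1, ?_⟩
    intro x _ y _ a b _ _ _
    simp only [smul_eq_mul]
    exact le_of_eq (by ring)
  have hmem : (p / qα) ∈ S := by
    refine ⟨fun q => q / qα, hgconc, ?_, rfl⟩
    intro z hz
    by_cases h : qα ≤ z
    · simp only [hf, if_pos h]
      rw [le_div_iff₀ hq0]
      linarith
    · simp only [hf, if_neg h]
      exact div_nonneg hz.1 hq0.le
  -- Lower bound: any concave majorant g satisfies p/qα ≤ g p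
  have hlb : ∀ y ∈ S, p / qα ≤ y := by
    rintro y ⟨g, hconc, hdom, rfl⟩
    set t : ℝ := p / qα with ht
    have ht0 : 0 ≤ t := div_nonneg hp.le hq0.le
    have ht1 : t ≤ 1 := by
      rw [ht, div_le_one hq0]; exact hpq.le
    have h0mem : (0 : ℝ) ∈ Set.Icc (0 : ℝ) 1 := by constructor <;> norm_num
    have hqmem : qα ∈ Set.Icc (0 : ℝ) 1 := ⟨hq0.le, hq1⟩
    have hcomb := hconc.2 h0mem hqmem (by linarith : (0:ℝ) ≤ 1 - t) ht0 (by ring)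
    have hpt : (1 - t) • (0 : ℝ) + t • qα = p := by
      simp only [smul_eq_mul]
      rw [ht, mul_zero, zero_add, div_mul_cancel₀ p hq0.ne']
    rw [hpt] at hcomb
    have hg0 : (0 : ℝ) ≤ g 0 := by
      have := hdom 0 h0mem
      simpa [hf, if_neg (not_le.mpr hq0)] using this
    have hgq : (1 : ℝ) ≤ g qα := by
      have := hdom qα hqmem
      simpa [hf] using this
    have : t ≤ (1 - t) • g 0 + t • g qα := by
      simp only [smul_eq_mul]
      nlinarith
    linarith [hcomb]
  have h2 : p / qα = 2 * α * p / (1 - 2 * (1 - α) * p) := by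
    have hαne : α ≠ 0 := hα.ne'
    have hq : qα = (1 - 2 * (1 - α) * p) / (2 * α) := by
      show 1 / (2 * α) - ((1 - α) / α) * p = _
      rw [eq_div_iff (by positivity : (2 * α) ≠ 0)]
      field_simp
    have hden : 0 < 1 - 2 * (1 - α) * p := by
      have : 0 < (1 - 2 * (1 - α) * p) / (2 * α) := hq ▸ hq0
      have h2α : 0 < 2 * α := by linarith
      exact (div_pos_iff.mp this).resolve_right (fun h => absurd h.2 (not_lt.mpr h2α.le)) |>.1
    rw [hq]
    field_simp
  refine ⟨?_, h2⟩
  exact le_antisymm (csInf_le ⟨p / qα, hlb⟩ hmem) (le_csInf ⟨_, hmem⟩ hlb)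
end

section
/- Grether's rule composed with itself along a two-step Bayesian path: for binary states, applying D_q^{II} where the interim sender posterior equals the prior (q = p) gives the threshold r_{α,β}(p,p) and the resulting two-step value function v^{II}(p) = min(p / r_{α,β}(p,p), 1); in particular for p ∈ (0,1/2), v^{II}(p) = p·[1 + (p/(1-p))^{α²/β - 1}] whenever p < r_{α,β}(p,p). -/
/-- For Grether's α–β rule on binary states, when the interim sender
posterior equals the prior (`q = p`), the two-step value function satisfies
`v^{II}(p) = min(p / r_{α,β}(p,p), 1)`; in particular for `p ∈ (0,1/2)`,
`v^{II}(p) = p·[1 + (p/(1-p))^{α²/β - 1}]` whenever `p < r_{α,β}(p,p)`. -/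
theorem grether_two_step_value_at_prior (α β p : ℝ) (hα : 0 < α) (hβ : 0 < β)
    (hp : 0 < p) (hp2 : p < 1 / 2) :
    let rth : ℝ → ℝ := fun q =>
      (1 - p) ^ ((α / β) * (α - β)) * (1 - q) ^ (α - 1) /
        ((1 - p) ^ ((α / β) * (α - β)) * (1 - q) ^ (α - 1) +
          p ^ ((α / β) * (α - β)) * q ^ (α - 1))
    let vII : ℝ → ℝ := fun q => if q < rth q then q / rth q else 1
    vII p = min (p / rth p) 1 ∧
    (p < rth p → vII p = p * (1 + (p / (1 - p)) ^ (α ^ 2 / β - 1))) := by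
  intro rth vII
  have hp1 : (0:ℝ) < 1 - p := by linarith
  have hexp : (α / β) * (α - β) + (α - 1) = α ^ 2 / β - 1 := by
    field_simp; ring
  have hA : (1 - p) ^ ((α/β)*(α-β)) * (1-p) ^ (α-1) = (1-p) ^ (α^2/β - 1) := by
    rw [← Real.rpow_add hp1, hexp]
  have hB : p ^ ((α/β)*(α-β)) * p ^ (α-1) = p ^ (α^2/β - 1) := by
    rw [← Real.rpow_add hp, hexp]
  have hApos : (0:ℝ) < (1-p) ^ (α^2/β - 1) := Real.rpow_pos_of_pos hp1 _
  have hBpos : (0:ℝ) < p ^ (α^2/β - 1) := Real.rpow_pos_of_pos hp _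
  have hrth : rth p = (1-p)^(α^2/β-1) / ((1-p)^(α^2/β-1) + p^(α^2/β-1)) := by
    simp only [rth, hA, hB]
  have hrpos : 0 < rth p := by rw [hrth]; positivity
  have hval : p / rth p = p * (1 + (p/(1-p))^(α^2/β-1)) := by
    rw [hrth, Real.div_rpow hp.le hp1.le]
    field_simp
  refine ⟨?_, fun h => by simpa [vII, if_pos h] using hval⟩
  simp only [vII]
  by_cases h : p < rth p
  · rw [if_pos h, min_eq_left (le_of_lt ((div_lt_one hrpos).mpr h))]
  · rw [if_neg h, min_eq_right ((one_le_div hrpos).mpr (le_of_not_gt h))]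
end
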